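/- For every integer n ≥ 1: (i) [2,…,2, 3, 2, n+1], with exactly n−1 entries equal to 2 at the start, equals (3n² + 3n + 1)/(3n²); and (ii) [n+1, 4, 2,…,2], with exactly n−1 entries equal to 2 at the end, equals (3n² + 3n + 1)/(3n + 1). -/

import Mathlib

/-- Hirzebruch–Jung continued fraction `[x₁,…,x_r] = x₁ − 1/(x₂ − 1/(⋯ − 1/x_r))`. -/
def hjCF : List ℤ → ℚ
  | [] => 0
  | a :: l => (a : ℚ) - 1 / hjCF l

/-!
Prefixing `k` entries `2` to a tail of value `x ≥ 1` applies the `k`-th iterate of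
`x ↦ 2 - 1/x`, namely `x ↦ ((k + 1) x - k) / (k x - (k - 1))`, and a block of `k` twos alone
has value `(k + 1) / k`. So (i) only needs the value `(5n + 2) / (2n + 1)` of `[3, 2, n + 1]`,
and (ii) is two more fraction steps.
-/

@[simp]
lemma hjCF_nil : hjCF [] = 0 := rfl

@[simp]
lemma hjCF_cons (a : ℤ) (l : List ℤ) : hjCF (a :: l) = a - 1 / hjCF l := rfl

-- Also right for `k = 0` (where (ii) needs it), as `hjCF [] = 0` and `x / 0 = 0` in `ℚ`.
lemma hjCF_replicate_two (k : ℕ) : hjCF (List.replicate k 2) = ((k : ℚ) + 1) / k := by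
  induction k with
  | zero => simp
  | succ k ih =>
    rw [List.replicate_succ, hjCF_cons, ih, one_div_div]
    push_cast
    field_simp
    ring

lemma hjCF_replicate_two_append (k : ℕ) (l : List ℤ) (hl : 1 ≤ hjCF l) :
    hjCF (List.replicate k 2 ++ l) =
      (((k : ℚ) + 1) * hjCF l - k) / ((k : ℚ) * hjCF l - ((k : ℚ) - 1)) := by
  induction k with
  | zero => simp
  | succ k ih =>
    have hden : ((k : ℚ) + 1) * hjCF l - k ≠ 0 := by nlinarith
    rw [List.replicate_succ, List.cons_append, hjCF_cons, ih, one_div_div]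
    push_cast
    rw [add_sub_cancel_right, eq_div_iff hden, sub_mul, div_mul_cancel₀ _ hden]
    ring

lemma hjCF_three_two_succ (n : ℕ) :
    hjCF [3, 2, (n : ℤ) + 1] = (5 * (n : ℚ) + 2) / (2 * n + 1) := by
  have h2 : hjCF [2, (n : ℤ) + 1] = (2 * (n : ℚ) + 1) / (n + 1) := by
    simp only [hjCF_cons, hjCF_nil, div_zero, sub_zero]
    push_cast
    field_simp
    ring
  rw [hjCF_cons, h2, one_div_div]
  field_simp
  ring

theorem stmt16 (n : ℕ) (hn : 1 ≤ n) :
    hjCF (List.replicate (n - 1) (2 : ℤ) ++ [3, 2, (n : ℤ) + 1]) =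
      (3 * (n : ℚ) ^ 2 + 3 * (n : ℚ) + 1) / (3 * (n : ℚ) ^ 2) ∧
    hjCF (((n : ℤ) + 1) :: (4 : ℤ) :: List.replicate (n - 1) (2 : ℤ)) =
      (3 * (n : ℚ) ^ 2 + 3 * (n : ℚ) + 1) / (3 * (n : ℚ) + 1) := by
  have hn' : (1 : ℚ) ≤ n := by exact_mod_cast hn
  have hn0 : (n : ℚ) ≠ 0 := by positivity
  have hpred : ((n - 1 : ℕ) : ℚ) = n - 1 := by push_cast [hn]; ring
  constructor
  · have htail : 1 ≤ hjCF [3, 2, (n : ℤ) + 1] := by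
      rw [hjCF_three_two_succ, le_div_iff₀ (by positivity)]
      linarith
    have hnum : (n - 1 + 1 : ℚ) * ((5 * n + 2) / (2 * n + 1)) - (n - 1) =
        (3 * n ^ 2 + 3 * n + 1) / (2 * n + 1) := by
      field_simp
      ring
    have hden : (n - 1 : ℚ) * ((5 * n + 2) / (2 * n + 1)) - (n - 1 - 1) =
        3 * n ^ 2 / (2 * n + 1) := by
      field_simp
      ring
    rw [hjCF_replicate_two_append _ _ htail, hjCF_three_two_succ, hpred, hnum, hden,
      div_div_div_cancel_right₀ (by positivity)]
  · have hsecond : (4 : ℚ) - (n - 1) / n = (3 * n + 1) / n := by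
      field_simp
      ring
    rw [hjCF_cons, hjCF_cons, hjCF_replicate_two, hpred, one_div_div, sub_add_cancel]
    push_cast
    rw [hsecond, one_div_div]
    field_simp
    ring
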